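/- Let f : GF(p)^n → GF(p) be a polynomial function, t = ∏_{j=1}^k x_{i_j}^{m_j}, and write f = t·f_{S(t)} + r with no monomial of r divisible by t. If f_{S(t)} does not depend on any of the variables x_{i_1},...,x_{i_k}, then the iterated finite difference f_t (m_j times w.r.t. each x_{i_j}, steps 1) equals the constant multiple m_1! ⋯ m_k! · f_{S(t)}. -/

import Mathlib

/-!
With `Δ_v = σ_v - 1`, where `σ_v` substitutes `X v + 1` for `X v`, the operator `Δ_v^M` applied
to `P` is the `M`-th forward difference of `x ↦ P[X v := x]` at `X v`; hence it kills `X v ^ a`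
for `a < M` and sends `X v ^ M` to `M!`, exactly as for one-variable polynomial functions.
Since `Δ_v` is linear over polynomials not involving `X v` and the `Δ_v` commute, every
monomial of `r` is killed by the factor of `f_t` belonging to a variable in which its degree is too
small, while `t · g` is sent to `m_1! ⋯ m_k! · g` one variable at a time.
-/

open Function

namespace MvPolynomial

variable {R σ : Type*} [CommRing R] [DecidableEq σ]

noncomputable def shift (v : σ) : MvPolynomial σ R →ₐ[R] MvPolynomial σ R :=
  bind₁ (update X v (X v + 1))

noncomputable def fwdDiffVar (v : σ) : Module.End R (MvPolynomial σ R) :=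
  (shift v).toLinearMap - 1

theorem fwdDiffVar_apply (v : σ) (P : MvPolynomial σ R) : fwdDiffVar v P = shift v P - P := rfl

theorem shift_X_of_ne {v w : σ} (h : w ≠ v) : shift v (X w : MvPolynomial σ R) = X w := by
  simp [shift, update_of_ne h]

theorem shift_eq_self_of_degreeOf_eq_zero {v : σ} {Q : MvPolynomial σ R}
    (h : degreeOf v Q = 0) : shift v Q = Q := by
  calc shift v Q = bind₁ X Q := eval₂Hom_congr' rfl (fun w hw _ => ?_) rfl
    _ = Q := by rw [bind₁_X_left, AlgHom.id_apply]
  have hwv : w ≠ v := by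
    rintro rfl
    exact mem_vars_iff_degreeOf_ne_zero.mp hw h
  simp [hwv]

theorem shift_comm (v w : σ) :
    (shift v).comp (shift w) = ((shift w).comp (shift v) : MvPolynomial σ R →ₐ[R] _) := by
  ext u
  by_cases hv : u = v <;> by_cases hw : u = w <;> simp_all [shift]

theorem commute_fwdDiffVar (v w : σ) :
    Commute (fwdDiffVar v : Module.End R (MvPolynomial σ R)) (fwdDiffVar w) := by
  have h : Commute ((shift v).toLinearMap : Module.End R (MvPolynomial σ R))
      (shift w).toLinearMap :=
    LinearMap.ext fun P => AlgHom.congr_fun (shift_comm v w) P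
  exact (h.sub_left (.one_left _)).sub_right ((Commute.one_right _).sub_left (.one_left _))

theorem fwdDiffVar_mul_of_shift_eq {v : σ} {Q : MvPolynomial σ R} (hQ : shift v Q = Q)
    (P : MvPolynomial σ R) : fwdDiffVar v (Q * P) = Q * fwdDiffVar v P := by
  rw [fwdDiffVar_apply, fwdDiffVar_apply, map_mul, hQ, mul_sub]

theorem fwdDiffVar_pow_mul_of_shift_eq {v : σ} {Q : MvPolynomial σ R} (hQ : shift v Q = Q)
    (M : ℕ) (P : MvPolynomial σ R) : (fwdDiffVar v ^ M) (Q * P) = Q * (fwdDiffVar v ^ M) P := by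
  induction M generalizing P with
  | zero => rfl
  | succ M ih =>
    rw [pow_succ, Module.End.mul_apply, fwdDiffVar_mul_of_shift_eq hQ, ih, Module.End.mul_apply]

theorem bind₁_update_shift (v : σ) (x P : MvPolynomial σ R) :
    bind₁ (update X v x) (shift v P) = bind₁ (update X v (x + 1)) P := by
  rw [shift, ← AlgHom.comp_apply, bind₁_comp_bind₁]
  congr 2
  ext1 u
  by_cases hu : u = v
  · subst hu
    simp
  · simp [update_of_ne hu]

theorem fwdDiffVar_pow_eq_fwdDiff_iter (v : σ) (M : ℕ) (P : MvPolynomial σ R) :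
    (fwdDiffVar v ^ M) P = (fwdDiff 1)^[M] (fun x => bind₁ (update X v x) P) (X v) := by
  induction M generalizing P with
  | zero => simp [bind₁_X_left]
  | succ M ih =>
    have hstep : (fun x => bind₁ (update X v x) (fwdDiffVar v P)) =
        fwdDiff 1 (fun x => bind₁ (update X v x) P) := by
      funext x
      rw [fwdDiffVar_apply, map_sub, bind₁_update_shift]
      rfl
    rw [pow_succ, Module.End.mul_apply, ih, iterate_succ_apply, hstep]

theorem fwdDiffVar_pow_X_pow_of_lt (v : σ) {a M : ℕ} (h : a < M) :
    (fwdDiffVar v ^ M) (X v ^ a : MvPolynomial σ R) = 0 := by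
  simp [fwdDiffVar_pow_eq_fwdDiff_iter, fwdDiff_iter_pow_eq_zero_of_lt h]

theorem fwdDiffVar_pow_X_pow_self (v : σ) (M : ℕ) :
    (fwdDiffVar v ^ M) (X v ^ M : MvPolynomial σ R) = M.factorial := by
  simp [fwdDiffVar_pow_eq_fwdDiff_iter, fwdDiff_iter_eq_factorial]

theorem fwdDiffVar_pow_monomial_of_lt (v : σ) {M : ℕ} {s : σ →₀ ℕ} (h : s v < M) (c : R) :
    (fwdDiffVar v ^ M) (monomial s c) = 0 := by
  have hsplit : monomial s c = monomial (s.erase v) c * X v ^ s v := by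
    rw [X_pow_eq_monomial, monomial_mul, mul_one, add_comm, Finsupp.single_add_erase]
  have hfree : degreeOf v (monomial (s.erase v) c) = 0 := by
    by_cases hc : c = 0
    · simp [hc]
    · rw [degreeOf_monomial_eq _ _ hc, Finsupp.erase_same]
  rw [hsplit, fwdDiffVar_pow_mul_of_shift_eq (shift_eq_self_of_degreeOf_eq_zero hfree),
    fwdDiffVar_pow_X_pow_of_lt v h, mul_zero]

section Iterated

variable {ι : Type*} (i : ι → σ) (m : ι → ℕ)

noncomputable def iterFwdDiff (L : List ι) : Module.End R (MvPolynomial σ R) :=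
  (L.map fun j => fwdDiffVar (i j) ^ m j).prod

theorem iterFwdDiff_cons (j : ι) (L : List ι) :
    (iterFwdDiff i m (j :: L) : Module.End R (MvPolynomial σ R)) =
      fwdDiffVar (i j) ^ m j * iterFwdDiff i m L :=
  List.prod_cons

theorem foldr_iterate_eq_iterFwdDiff (L : List ι) (P : MvPolynomial σ R) :
    L.foldr (fun j P₀ => (fun P => bind₁ (update X (i j) (X (i j) + 1)) P - P)^[m j] P₀) P =
      iterFwdDiff i m L P := by
  induction L with
  | nil => rfl
  | cons j L ih =>
    rw [List.foldr_cons, ih, iterFwdDiff_cons, Module.End.mul_apply, Module.End.pow_apply]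
    rfl

theorem iterFwdDiff_monomial_eq_zero {L : List ι} {j₀ : ι} (hj₀ : j₀ ∈ L) {s : σ →₀ ℕ}
    (hs : s (i j₀) < m j₀) (c : R) : iterFwdDiff i m L (monomial s c) = 0 := by
  induction L with
  | nil => simp at hj₀
  | cons j L ih =>
    rw [iterFwdDiff_cons, Module.End.mul_apply]
    rcases List.mem_cons.mp hj₀ with rfl | hj₀
    · have hcomm : Commute (fwdDiffVar (i j₀) ^ m j₀)
          (iterFwdDiff i m L : Module.End R (MvPolynomial σ R)) :=
        Commute.list_prod_right _ _ fun _ hD => by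
          obtain ⟨j, -, rfl⟩ := List.mem_map.mp hD
          exact (commute_fwdDiffVar _ _).pow_pow _ _
      rw [← Module.End.mul_apply, hcomm.eq, Module.End.mul_apply,
        fwdDiffVar_pow_monomial_of_lt _ hs, map_zero]
    · rw [ih hj₀, map_zero]

theorem iterFwdDiff_eq_zero {L : List ι} {P : MvPolynomial σ R}
    (hP : ∀ s ∈ P.support, ∃ j ∈ L, s (i j) < m j) : iterFwdDiff i m L P = 0 := by
  rw [P.as_sum, map_sum]
  refine Finset.sum_eq_zero fun s hs => ?_
  obtain ⟨j, hj, hsj⟩ := hP s hs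
  exact iterFwdDiff_monomial_eq_zero i m hj hsj _

theorem iterFwdDiff_prod_X_pow_mul {L : List ι} (hL : (L.map i).Nodup) {Q : MvPolynomial σ R}
    (hQ : ∀ j ∈ L, shift (i j) Q = Q) :
    iterFwdDiff i m L ((L.map fun j => X (i j) ^ m j).prod * Q) =
      (((L.map fun j => (m j).factorial).prod : ℕ) : MvPolynomial σ R) * Q := by
  induction L generalizing Q with
  | nil => simp [iterFwdDiff]
  | cons j L ih =>
    obtain ⟨hjL, hL⟩ := List.nodup_cons.mp hL
    have hX : ∀ j' ∈ L, shift (i j') (X (i j) ^ m j * Q) = X (i j) ^ m j * Q := fun j' hj' => by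
      have hne : i j ≠ i j' := fun h => hjL (h ▸ List.mem_map_of_mem hj')
      rw [map_mul, map_pow, shift_X_of_ne hne, hQ j' (List.mem_cons_of_mem j hj')]
    have hc : shift (i j) ((((L.map fun j => (m j).factorial).prod : ℕ) : MvPolynomial σ R) * Q)
        = ((L.map fun j => (m j).factorial).prod : ℕ) * Q := by
      rw [map_mul, map_natCast, hQ j List.mem_cons_self]
    rw [iterFwdDiff_cons, Module.End.mul_apply, List.map_cons, List.prod_cons, mul_assoc,
      mul_left_comm, ih hL hX, ← mul_assoc, mul_comm _ (X (i j) ^ m j), mul_assoc,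
      mul_comm (X (i j) ^ m j), fwdDiffVar_pow_mul_of_shift_eq hc, fwdDiffVar_pow_X_pow_self]
    simp only [List.map_cons, List.prod_cons]
    push_cast
    ring

end Iterated

end MvPolynomial

open MvPolynomial

theorem finite_difference_fundamental_independent_case_general
    (p : ℕ) {n k : ℕ}
    (i : Fin k → Fin n) (hi : Function.Injective i)
    (m : Fin k → ℕ)
    (f g r : MvPolynomial (Fin n) (ZMod p))
    (hf : f = (∏ j, X (i j) ^ m j) * g + r)
    (hr : ∀ s ∈ r.support, ∃ j : Fin k, s (i j) < m j)
    (hg : ∀ j : Fin k, g.degreeOf (i j) = 0)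
    (ft : MvPolynomial (Fin n) (ZMod p))
    (hft : ft = (List.finRange k).foldr
      (fun j P₀ =>
        (fun P : MvPolynomial (Fin n) (ZMod p) =>
            bind₁ (Function.update X (i j) (X (i j) + 1)) P - P)^[m j] P₀)
      f) :
    ft = C ((∏ j, (m j).factorial : ℕ) : ZMod p) * g := by
  have hmain := iterFwdDiff_prod_X_pow_mul i m ((List.nodup_finRange k).map hi)
    (fun j _ => shift_eq_self_of_degreeOf_eq_zero (hg j))
  have hrest : iterFwdDiff i m (List.finRange k) r = 0 :=
    iterFwdDiff_eq_zero i m fun s hs => (hr s hs).imp fun j hj => ⟨List.mem_finRange j, hj⟩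
  rw [hft, foldr_iterate_eq_iterFwdDiff, hf, map_add, hrest, add_zero, Fin.prod_univ_def, hmain,
    Fin.prod_univ_def, map_natCast]

/-- Write `f = t·f_{S(t)} + r` with `t = ∏ x_{i_j}^{m_j}` and no monomial of `r`
divisible by `t`. If `f_{S(t)}` does not depend on any of the variables
`x_{i_1}, …, x_{i_k}`, then the iterated finite difference `f_t` equals the
constant multiple `m_1! ⋯ m_k! · f_{S(t)}`. -/
theorem finite_difference_fundamental_independent_case
    (p : ℕ) [Fact p.Prime] {n k : ℕ}
    (i : Fin k → Fin n) (hi : Function.Injective i)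
    (m : Fin k → ℕ) (hm : ∀ j, 1 ≤ m j) (hmp : ∀ j, m j ≤ p - 1)
    (f g r : MvPolynomial (Fin n) (ZMod p))
    (hfred : ∀ j : Fin n, f.degreeOf j ≤ p - 1)
    (hf : f = (∏ j, X (i j) ^ m j) * g + r)
    (hr : ∀ s ∈ r.support, ∃ j : Fin k, s (i j) < m j)
    (hg : ∀ j : Fin k, g.degreeOf (i j) = 0)
    (ft : MvPolynomial (Fin n) (ZMod p))
    (hft : ft = (List.finRange k).foldr
      (fun j P₀ =>
        (fun P : MvPolynomial (Fin n) (ZMod p) =>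
            bind₁ (Function.update X (i j) (X (i j) + 1)) P - P)^[m j] P₀)
      f) :
    ft = C ((∏ j, (m j).factorial : ℕ) : ZMod p) * g :=
  finite_difference_fundamental_independent_case_general p i hi m f g r hf hr hg ft hft
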